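/- arXiv:2410.06869 — 7 statements merged into one kernel-verified Lean document; each statement's English description precedes it below -/
import Mathlib

section
/- Let T₁ be a densely defined closed operator on a complex Hilbert space H₁ and T₂ a densely defined closed operator on a complex Hilbert space H₂. Define their direct sum T₁ ⊕ T₂ on the domain D(T₁) × D(T₂) ⊆ H₁ × H₂ by (x, y) ↦ (T₁x, T₂y). Then T₁ and T₂ are both EP if and only if T₁ ⊕ T₂ is EP. -/
/-!
Everything happens componentwise. The range of `T₁ ⊕ T₂` is `R(T₁) × R(T₂)`, and because both
domains are dense, `(T₁ ⊕ T₂)* = T₁* ⊕ T₂*`: the inclusion `⊇` holds for formal adjoints, and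
testing the adjoint against vectors `(x, 0)` and `(0, x)` gives the reverse inclusion of domains.
The theorem then follows since a product of nonempty sets is closed iff both factors are, and
a product of submodules determines its factors.
-/

open LinearPMap

variable {H₁ H₂ : Type*} [NormedAddCommGroup H₁] [InnerProductSpace ℂ H₁] [CompleteSpace H₁]
  [NormedAddCommGroup H₂] [InnerProductSpace ℂ H₂] [CompleteSpace H₂]

/-- The range of a densely defined (partial) operator, as a submodule. -/
noncomputable def pmRange {H : Type*} [NormedAddCommGroup H] [InnerProductSpace ℂ H]
    (T : H →ₗ.[ℂ] H) : Submodule ℂ H := LinearMap.range T.toFun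

/-- A densely defined closed operator is EP if its range is closed and coincides with the
range of its adjoint. -/
def IsEP {H : Type*} [NormedAddCommGroup H] [InnerProductSpace ℂ H] [CompleteSpace H]
    (T : H →ₗ.[ℂ] H) : Prop :=
  IsClosed ((pmRange T : Submodule ℂ H) : Set H) ∧ pmRange T = pmRange T.adjoint

/-- The direct sum `T₁ ⊕ T₂` of two partial operators, defined on `D(T₁) × D(T₂)` inside the
product Hilbert space `H₁ × H₂` (realized as `WithLp 2 (H₁ × H₂)`) by `(x, y) ↦ (T₁ x, T₂ y)`. -/
noncomputable def pmProd (T₁ : H₁ →ₗ.[ℂ] H₁) (T₂ : H₂ →ₗ.[ℂ] H₂) :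
    (WithLp 2 (H₁ × H₂)) →ₗ.[ℂ] (WithLp 2 (H₁ × H₂)) where
  domain := (T₁.domain.prod T₂.domain : Submodule ℂ (H₁ × H₂)).comap
    (WithLp.linearEquiv 2 ℂ (H₁ × H₂)).toLinearMap
  toFun :=
    { toFun := fun x => WithLp.toLp 2 (T₁ ⟨x.1.ofLp.1, x.2.1⟩, T₂ ⟨x.1.ofLp.2, x.2.2⟩)
      map_add' := fun x y => WithLp.ofLp_injective 2 <|
        Prod.ext (T₁.map_add ⟨x.1.ofLp.1, x.2.1⟩ ⟨y.1.ofLp.1, y.2.1⟩)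
          (T₂.map_add ⟨x.1.ofLp.2, x.2.2⟩ ⟨y.1.ofLp.2, y.2.2⟩)
      map_smul' := fun c x => WithLp.ofLp_injective 2 <|
        Prod.ext (T₁.map_smul c ⟨x.1.ofLp.1, x.2.1⟩) (T₂.map_smul c ⟨x.1.ofLp.2, x.2.2⟩) }

theorem isClosed_prod_iff_of_nonempty {X Y : Type*} [TopologicalSpace X] [TopologicalSpace Y]
    {s : Set X} {t : Set Y} (h : (s ×ˢ t).Nonempty) :
    IsClosed (s ×ˢ t) ↔ IsClosed s ∧ IsClosed t := by
  have h' : (closure s ×ˢ closure t).Nonempty :=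
    h.mono (Set.prod_mono subset_closure subset_closure)
  simp only [← closure_eq_iff_isClosed, closure_prod_eq, Set.prod_eq_prod_iff_of_nonempty h']

theorem Submodule.prod_eq_prod_iff {R M N : Type*} [Semiring R] [AddCommMonoid M] [Module R M]
    [AddCommMonoid N] [Module R N] {p p' : Submodule R M} {q q' : Submodule R N} :
    p.prod q = p'.prod q' ↔ p = p' ∧ q = q' := by
  have h : ((p : Set M) ×ˢ (q : Set N)).Nonempty := ⟨0, zero_mem p, zero_mem q⟩
  simp only [← SetLike.coe_set_eq, Submodule.prod_coe, Set.prod_eq_prod_iff_of_nonempty h]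

section

variable (T₁ : H₁ →ₗ.[ℂ] H₁) (T₂ : H₂ →ₗ.[ℂ] H₂)

omit [CompleteSpace H₁] [CompleteSpace H₂] in
theorem pmRange_pmProd : pmRange (pmProd T₁ T₂) =
    ((pmRange T₁).prod (pmRange T₂)).comap (WithLp.linearEquiv 2 ℂ (H₁ × H₂)).toLinearMap := by
  ext z
  constructor
  · rintro ⟨x, rfl⟩
    exact ⟨⟨_, rfl⟩, ⟨_, rfl⟩⟩
  · rintro ⟨⟨x₁, h₁⟩, ⟨x₂, h₂⟩⟩
    exact ⟨⟨WithLp.toLp 2 (x₁, x₂), x₁.2, x₂.2⟩, WithLp.ofLp_injective 2 (Prod.ext h₁ h₂)⟩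

omit [CompleteSpace H₁] [CompleteSpace H₂] in
theorem dense_pmProd_domain (hd₁ : Dense (T₁.domain : Set H₁)) (hd₂ : Dense (T₂.domain : Set H₂)) :
    Dense ((pmProd T₁ T₂).domain : Set (WithLp 2 (H₁ × H₂))) :=
  (hd₁.prod hd₂).preimage (WithLp.homeomorphProd 2 H₁ H₂).isOpenMap

variable {T₁ T₂}

omit [CompleteSpace H₁] [CompleteSpace H₂] in
theorem pmProd_apply (x : (pmProd T₁ T₂).domain) :
    pmProd T₁ T₂ x = WithLp.toLp 2 (T₁ ⟨x.1.ofLp.1, x.2.1⟩, T₂ ⟨x.1.ofLp.2, x.2.2⟩) :=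
  rfl

theorem pmProd_adjoint_isFormalAdjoint (hd₁ : Dense (T₁.domain : Set H₁))
    (hd₂ : Dense (T₂.domain : Set H₂)) :
    (pmProd T₁† T₂†).IsFormalAdjoint (pmProd T₁ T₂) := fun x y => by
  simp only [WithLp.prod_inner_apply]
  exact congrArg₂ (· + ·) (adjoint_isFormalAdjoint hd₁ ⟨_, x.2.1⟩ ⟨_, y.2.1⟩)
    (adjoint_isFormalAdjoint hd₂ ⟨_, x.2.2⟩ ⟨_, y.2.2⟩)

theorem ofLp_fst_mem_adjoint_domain (hd : Dense ((pmProd T₁ T₂).domain : Set (WithLp 2 (H₁ × H₂))))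
    {y : WithLp 2 (H₁ × H₂)} (hy : y ∈ (pmProd T₁ T₂)†.domain) : y.ofLp.1 ∈ T₁†.domain := by
  refine mem_adjoint_domain_of_exists _ ⟨((pmProd T₁ T₂)† ⟨y, hy⟩).ofLp.1, fun x₁ => ?_⟩
  have h := adjoint_isFormalAdjoint hd ⟨y, hy⟩ ⟨WithLp.toLp 2 (x₁, 0), x₁.2, zero_mem _⟩
  simpa [WithLp.prod_inner_apply, pmProd_apply, ← ZeroMemClass.zero_def] using h

theorem ofLp_snd_mem_adjoint_domain (hd : Dense ((pmProd T₁ T₂).domain : Set (WithLp 2 (H₁ × H₂))))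
    {y : WithLp 2 (H₁ × H₂)} (hy : y ∈ (pmProd T₁ T₂)†.domain) : y.ofLp.2 ∈ T₂†.domain := by
  refine mem_adjoint_domain_of_exists _ ⟨((pmProd T₁ T₂)† ⟨y, hy⟩).ofLp.2, fun x₂ => ?_⟩
  have h := adjoint_isFormalAdjoint hd ⟨y, hy⟩ ⟨WithLp.toLp 2 (0, x₂), zero_mem _, x₂.2⟩
  simpa [WithLp.prod_inner_apply, pmProd_apply, ← ZeroMemClass.zero_def] using h

theorem adjoint_pmProd (hd₁ : Dense (T₁.domain : Set H₁)) (hd₂ : Dense (T₂.domain : Set H₂)) :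
    (pmProd T₁ T₂)† = pmProd T₁† T₂† := by
  have hd := dense_pmProd_domain T₁ T₂ hd₁ hd₂
  have hle : pmProd T₁† T₂† ≤ (pmProd T₁ T₂)† :=
    (pmProd_adjoint_isFormalAdjoint hd₁ hd₂).symm.le_adjoint hd
  refine (eq_of_le_of_domain_eq hle (le_antisymm hle.1 fun y hy => ?_)).symm
  exact ⟨ofLp_fst_mem_adjoint_domain hd hy, ofLp_snd_mem_adjoint_domain hd hy⟩

theorem isEP_pmProd_iff (hd₁ : Dense (T₁.domain : Set H₁)) (hd₂ : Dense (T₂.domain : Set H₂)) :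
    IsEP (pmProd T₁ T₂) ↔ IsClosed ((pmRange T₁).prod (pmRange T₂) : Set (H₁ × H₂)) ∧
      (pmRange T₁).prod (pmRange T₂) = (pmRange T₁†).prod (pmRange T₂†) := by
  rw [IsEP, adjoint_pmProd hd₁ hd₂, pmRange_pmProd, pmRange_pmProd, Submodule.comap_coe,
    (Submodule.comap_injective_of_surjective (WithLp.linearEquiv 2 ℂ _).surjective).eq_iff]
  exact and_congr_left' (WithLp.homeomorphProd 2 H₁ H₂).isClosed_preimage

end

theorem stmt1_general (T₁ : H₁ →ₗ.[ℂ] H₁) (T₂ : H₂ →ₗ.[ℂ] H₂)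
    (hd₁ : Dense (T₁.domain : Set H₁)) (hd₂ : Dense (T₂.domain : Set H₂)) :
    (IsEP T₁ ∧ IsEP T₂) ↔ IsEP (pmProd T₁ T₂) := by
  rw [isEP_pmProd_iff hd₁ hd₂, Submodule.prod_coe,
    isClosed_prod_iff_of_nonempty ⟨0, zero_mem _, zero_mem _⟩, Submodule.prod_eq_prod_iff,
    IsEP, IsEP]
  tauto

/-- Let `T₁`, `T₂` be densely defined closed operators on complex Hilbert spaces `H₁`, `H₂`.
Then `T₁` and `T₂` are both EP if and only if `T₁ ⊕ T₂` is EP. -/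
theorem stmt1 (T₁ : H₁ →ₗ.[ℂ] H₁) (T₂ : H₂ →ₗ.[ℂ] H₂)
    (hd₁ : Dense (T₁.domain : Set H₁)) (hd₂ : Dense (T₂.domain : Set H₂))
    (hc₁ : IsClosed (T₁.graph : Set (H₁ × H₁))) (hc₂ : IsClosed (T₂.graph : Set (H₂ × H₂))) :
    (IsEP T₁ ∧ IsEP T₂) ↔ IsEP (pmProd T₁ T₂) :=
  stmt1_general T₁ T₂ hd₁ hd₂
end

section
/- Let T be a bounded linear operator on a complex Hilbert space H with closed range, let |T| denote the positive square root of T*T, and let U be a bounded operator on H satisfying: T = U ∘ |T|, Ux = 0 for all x ∈ ker T, and ‖Ux‖ = ‖x‖ for all x ∈ (ker T)ᗮ (so that T = U|T| is the polar decomposition of T). Then T is EP if and only if U is EP. -/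
/-!
From `|T|² = T*T` we get `ker |T| = ker T =: K`, so the self-adjoint `|T|` has range dense in
`Kᗮ`, and `U` is a partial isometry with `U*U = 1` on `Kᗮ`, whence `R(U*) = Kᗮ`. As
`R(T) = U(R(|T|))` is closed and dense in `U(Kᗮ) = R(U)`, we get `R(U) = R(T)`; injectivity of
`U` on `Kᗮ` then gives `R(|T|) = Kᗮ`, so `R(T*) = |T|(R(U*)) = Kᗮ` too. Hence both `T` and `U`
are EP exactly when `R(T)` is closed and equals `(ker T)ᗮ`.
-/

variable {H : Type*} [NormedAddCommGroup H] [InnerProductSpace ℂ H] [CompleteSpace H]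

/-- A bounded operator on a complex Hilbert space is EP if its range is closed and coincides
with the range of its adjoint. -/
def IsEPBounded (A : H →L[ℂ] H) : Prop :=
  IsClosed ((LinearMap.range (A : H →ₗ[ℂ] H) : Submodule ℂ H) : Set H) ∧
    LinearMap.range (A : H →ₗ[ℂ] H) = LinearMap.range ((ContinuousLinearMap.adjoint A : H →L[ℂ] H) : H →ₗ[ℂ] H)

open Submodule

namespace ContinuousLinearMap

variable {𝕜 E F : Type*} [RCLike 𝕜] [NormedAddCommGroup E] [InnerProductSpace 𝕜 E]
  [NormedAddCommGroup F] [InnerProductSpace 𝕜 F]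

theorem ker_eq_ker_of_comp_self_eq_adjoint_comp_self [CompleteSpace E] [CompleteSpace F]
    {R : E →L[𝕜] E} {T : E →L[𝕜] F} (hR : IsSelfAdjoint R) (h : R ∘L R = adjoint T ∘L T) :
    R.ker = T.ker := by
  rw [← ker_adjoint_comp_self T, ← h]
  conv_lhs => rw [← ker_adjoint_comp_self R, hR.adjoint_eq]

section PartialIsometry

variable {K : Submodule 𝕜 E} {U : E →L[𝕜] F}

theorem eq_of_apply_eq_of_mem_orthogonal (hUiso : ∀ x ∈ Kᗮ, ‖U x‖ = ‖x‖) {v w : E}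
    (hv : v ∈ Kᗮ) (hw : w ∈ Kᗮ) (h : U v = U w) : v = w := by
  rw [← sub_eq_zero, ← norm_eq_zero, ← hUiso _ (sub_mem hv hw), map_sub, h, sub_self, norm_zero]

variable [K.HasOrthogonalProjection]

theorem map_orthogonal_eq_range_of_forall_apply_eq_zero (hU0 : ∀ x ∈ K, U x = 0) :
    Kᗮ.map (U : E →ₗ[𝕜] F) = U.range := by
  refine le_antisymm LinearMap.map_le_range ?_
  rintro _ ⟨x, rfl⟩
  obtain ⟨p, hp, q, hq, rfl⟩ := K.exists_add_mem_mem_orthogonal x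
  exact ⟨q, hq, by simp [hU0 p hp]⟩

theorem ker_eq_of_isometric_on_orthogonal (hU0 : ∀ x ∈ K, U x = 0)
    (hUiso : ∀ x ∈ Kᗮ, ‖U x‖ = ‖x‖) : U.ker = K := by
  refine le_antisymm (fun x hx => ?_) hU0
  obtain ⟨p, hp, q, hq, rfl⟩ := K.exists_add_mem_mem_orthogonal x
  have hq0 : q = 0 :=
    eq_of_apply_eq_of_mem_orthogonal hUiso hq Kᗮ.zero_mem (by simpa [hU0 p hp] using hx)
  simpa [hq0] using hp

variable [CompleteSpace E] [CompleteSpace F]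

theorem adjoint_apply_apply_of_mem_orthogonal (hU0 : ∀ x ∈ K, U x = 0)
    (hUiso : ∀ x ∈ Kᗮ, ‖U x‖ = ‖x‖) {w : E} (hw : w ∈ Kᗮ) : adjoint U (U w) = w := by
  let V : Kᗮ →ₗᵢ[𝕜] F := ⟨U.toLinearMap ∘ₗ Kᗮ.subtype, fun x => hUiso x x.2⟩
  refine ext_inner_right 𝕜 fun v => ?_
  obtain ⟨p, hp, q, hq, rfl⟩ := K.exists_add_mem_mem_orthogonal v
  rw [adjoint_inner_left, map_add, hU0 p hp, zero_add, inner_add_right,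
    inner_left_of_mem_orthogonal hp hw, zero_add]
  exact V.inner_map_map ⟨w, hw⟩ ⟨q, hq⟩

theorem range_adjoint_eq_orthogonal (hU0 : ∀ x ∈ K, U x = 0)
    (hUiso : ∀ x ∈ Kᗮ, ‖U x‖ = ‖x‖) : (adjoint U).range = Kᗮ := by
  refine le_antisymm ?_ fun w hw => ⟨U w, adjoint_apply_apply_of_mem_orthogonal hU0 hUiso hw⟩
  rw [← ker_eq_of_isometric_on_orthogonal hU0 hUiso, orthogonal_ker]
  exact le_topologicalClosure _

end PartialIsometry

section Polar

variable [CompleteSpace E] {R : E →L[𝕜] E} {T U : E →L[𝕜] F}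

theorem range_eq_range_of_eq_comp (hR : IsSelfAdjoint R) (hRT : R.ker = T.ker)
    (hTUR : T = U ∘L R) (hU0 : ∀ x ∈ T.ker, U x = 0) (hT : IsClosed (T.range : Set F)) :
    U.range = T.range := by
  refine le_antisymm ?_ (hTUR ▸ LinearMap.range_comp_le_range _ _)
  have hclosure : T.kerᗮ = R.range.topologicalClosure := by
    rw [← hRT, orthogonal_ker, hR.adjoint_eq]
  rw [← map_orthogonal_eq_range_of_forall_apply_eq_zero hU0, hclosure]
  rintro _ ⟨x, hx, rfl⟩
  rw [← SetLike.mem_coe, ← hT.closure_eq]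
  refine closure_mono ?_ (image_closure_subset_closure_image U.continuous ⟨x, hx, rfl⟩)
  rintro _ ⟨_, ⟨y, rfl⟩, rfl⟩
  exact ⟨y, by simp [hTUR]⟩

theorem range_eq_orthogonal_ker_of_eq_comp (hR : IsSelfAdjoint R) (hRT : R.ker = T.ker)
    (hTUR : T = U ∘L R) (hU0 : ∀ x ∈ T.ker, U x = 0) (hUiso : ∀ x ∈ T.kerᗮ, ‖U x‖ = ‖x‖)
    (hT : IsClosed (T.range : Set F)) : R.range = T.kerᗮ := by
  have hRrange : R.range ≤ T.kerᗮ := by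
    rw [← hRT, orthogonal_ker, hR.adjoint_eq]
    exact le_topologicalClosure _
  refine le_antisymm hRrange fun w hw => ?_
  obtain ⟨x, hx⟩ : U w ∈ T.range := range_eq_range_of_eq_comp hR hRT hTUR hU0 hT ▸ ⟨w, rfl⟩
  refine ⟨x, eq_of_apply_eq_of_mem_orthogonal hUiso (hRrange ⟨x, rfl⟩) hw ?_⟩
  simpa [hTUR] using hx

variable [CompleteSpace F]

theorem range_adjoint_eq_orthogonal_ker_of_eq_comp (hR : IsSelfAdjoint R) (hRT : R.ker = T.ker)
    (hTUR : T = U ∘L R) (hU0 : ∀ x ∈ T.ker, U x = 0) (hUiso : ∀ x ∈ T.kerᗮ, ‖U x‖ = ‖x‖)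
    (hT : IsClosed (T.range : Set F)) : (adjoint T).range = T.kerᗮ := by
  have hTadj : adjoint T = R ∘L adjoint U := by rw [hTUR, adjoint_comp, hR.adjoint_eq]
  rw [hTadj, toLinearMap_comp, LinearMap.range_comp, range_adjoint_eq_orthogonal hU0 hUiso, ← hRT,
    map_orthogonal_eq_range_of_forall_apply_eq_zero (fun x hx => hx), hRT,
    range_eq_orthogonal_ker_of_eq_comp hR hRT hTUR hU0 hUiso hT]

end Polar

end ContinuousLinearMap

open ContinuousLinearMap

/-- Let `T` be a bounded operator on a complex Hilbert space `H` with closed range, let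
`R = |T|` be the positive square root of `T*T`, and let `U` be a bounded operator with
`T = U ∘ |T|`, `U = 0` on `ker T` and `U` isometric on `(ker T)ᗮ` (so `T = U|T|` is the polar
decomposition of `T`).  Then `T` is EP if and only if `U` is EP. -/
theorem stmt2 (T U R : H →L[ℂ] H)
    (hrange : IsClosed ((LinearMap.range (T : H →ₗ[ℂ] H) : Submodule ℂ H) : Set H))
    (hRpos : R.IsPositive)
    (hRsq : R ∘L R = ContinuousLinearMap.adjoint T ∘L T)
    (hTUR : T = U ∘L R)
    (hU0 : ∀ x ∈ LinearMap.ker (T : H →ₗ[ℂ] H), U x = 0)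
    (hUiso : ∀ x ∈ (LinearMap.ker (T : H →ₗ[ℂ] H) : Submodule ℂ H)ᗮ, ‖U x‖ = ‖x‖) :
    IsEPBounded T ↔ IsEPBounded U := by
  have hR : IsSelfAdjoint R := hRpos.isSelfAdjoint
  have hRT : R.ker = T.ker := ker_eq_ker_of_comp_self_eq_adjoint_comp_self hR hRsq
  have hUT : U.range = T.range := range_eq_range_of_eq_comp hR hRT hTUR hU0 hrange
  have hTadj : (adjoint T).range = T.kerᗮ :=
    range_adjoint_eq_orthogonal_ker_of_eq_comp hR hRT hTUR hU0 hUiso hrange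
  have hUadj : (adjoint U).range = T.kerᗮ := range_adjoint_eq_orthogonal hU0 hUiso
  unfold IsEPBounded
  rw [hUT, hTadj, hUadj]
end

section
/- Let T be a bounded linear operator on a complex Hilbert space H with closed range. Then T is EP if and only if for every natural number n ≥ 1 the power Tⁿ is EP, i.e., R(Tⁿ) is closed and R(Tⁿ) = R((Tⁿ)*). -/
variable {H : Type*} [NormedAddCommGroup H] [InnerProductSpace ℂ H] [CompleteSpace H]

/-!
If `T` is EP then `ker T = R(T*)ᗮ = R(T)ᗮ`, and since `R(T)` is closed, `H = R(T) ⊕ ker T`.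
Hence `T` maps `R(T)` onto `R(T)`, so `R(Tⁿ) = R(T)` for every `n ≥ 1`. The adjoint `T*` is EP
as well, and `(Tⁿ)* = (T*)ⁿ` gives `R((Tⁿ)*) = R(T*) = R(T) = R(Tⁿ)`.
-/

namespace LinearMap

variable {R M : Type*} [Semiring R] [AddCommMonoid M] [Module R M]

theorem map_range_of_range_sup_ker_eq_top {f : M →ₗ[R] M} (h : range f ⊔ ker f = ⊤) :
    (range f).map f = range f := by
  calc (range f).map f = (range f ⊔ ker f).map f := by
        rw [Submodule.map_sup, left_eq_sup]
        exact (Submodule.map_comap_le f ⊥).trans bot_le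
    _ = range f := by rw [h, Submodule.map_top]

theorem range_pow_of_range_sup_ker_eq_top {f : M →ₗ[R] M} (h : range f ⊔ ker f = ⊤) {n : ℕ}
    (hn : 1 ≤ n) : range (f ^ n) = range f := by
  induction n, hn using Nat.le_induction with
  | base => rw [pow_one]
  | succ n _ ih =>
    rw [pow_succ', Module.End.mul_eq_comp, range_comp, ih, map_range_of_range_sup_ker_eq_top h]

end LinearMap

open ContinuousLinearMap

namespace IsEPBounded

variable {T : H →L[ℂ] H}

theorem ker_eq_orthogonal_range (hT : IsEPBounded T) :
    LinearMap.ker (T : H →ₗ[ℂ] H) = (LinearMap.range (T : H →ₗ[ℂ] H))ᗮ := by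
  rw [hT.2]
  simpa using (adjoint T).orthogonal_range.symm

theorem range_sup_ker_eq_top (hT : IsEPBounded T) :
    LinearMap.range (T : H →ₗ[ℂ] H) ⊔ LinearMap.ker (T : H →ₗ[ℂ] H) = ⊤ := by
  have : CompleteSpace (LinearMap.range (T : H →ₗ[ℂ] H)) := hT.1.completeSpace_coe
  rw [hT.ker_eq_orthogonal_range, Submodule.sup_orthogonal_of_hasOrthogonalProjection]

theorem adjoint (hT : IsEPBounded T) : IsEPBounded (adjoint T) :=
  ⟨hT.2 ▸ hT.1, by rw [adjoint_adjoint, hT.2]⟩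

theorem range_pow (hT : IsEPBounded T) {n : ℕ} (hn : 1 ≤ n) :
    LinearMap.range ((T ^ n : H →L[ℂ] H) : H →ₗ[ℂ] H) = LinearMap.range (T : H →ₗ[ℂ] H) := by
  rw [toLinearMap_pow, LinearMap.range_pow_of_range_sup_ker_eq_top hT.range_sup_ker_eq_top hn]

theorem pow (hT : IsEPBounded T) {n : ℕ} (hn : 1 ≤ n) : IsEPBounded (T ^ n) := by
  refine ⟨hT.range_pow hn ▸ hT.1, ?_⟩
  rw [hT.range_pow hn, ← star_eq_adjoint, star_pow, star_eq_adjoint, hT.adjoint.range_pow hn, hT.2]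

end IsEPBounded

theorem stmt4_general (T : H →L[ℂ] H) :
    IsEPBounded T ↔ ∀ n : ℕ, 1 ≤ n → IsEPBounded (T ^ n) :=
  ⟨fun hT _ hn ↦ hT.pow hn, fun h ↦ by simpa using h 1 le_rfl⟩

/-- Let `T` be a bounded operator on a complex Hilbert space `H` with closed range.
Then `T` is EP if and only if `Tⁿ` is EP for every natural number `n ≥ 1`. -/
theorem stmt4 (T : H →L[ℂ] H)
    (hrange : IsClosed ((LinearMap.range (T : H →ₗ[ℂ] H) : Submodule ℂ H) : Set H)) :
    IsEPBounded T ↔ ∀ n : ℕ, 1 ≤ n → IsEPBounded (T ^ n) :=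
  stmt4_general T
end

section
/- Let T be a bounded EP operator on a complex Hilbert space H. Then 0 is not a limit point of the spectrum of T: there exists ε > 0 such that every λ in the spectrum of T with λ ≠ 0 satisfies |λ| ≥ ε. -/
/-!
For `λ ≠ 0` the equation `λ x - T x = y` reduces to one on the closed subspace `R = R(T)`:
if `v ∈ R` solves `λ v - T v = λ⁻¹ T y`, then `x = λ⁻¹ y + v` works, and a solution of the
homogeneous equation lies in `R` because `λ x = T x`. So every nonzero spectral value of `T` is
one of `T|_R : R → R`. For an EP operator `ker T = R(T*)ᗮ = Rᗮ`, hence `T|_R` is injective, and it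
is onto because `T` kills the `Rᗮ`-component of every vector. Thus `0` lies outside the closed
set `σ(T|_R)`, which therefore misses a whole disc around `0`.
-/

namespace ContinuousLinearMap

section Banach

variable {𝕜 E : Type*} [NontriviallyNormedField 𝕜] [NormedAddCommGroup E] [NormedSpace 𝕜 E]
  [CompleteSpace E]

theorem mem_spectrum_restrict_of_mem_spectrum {T : E →L[𝕜] E} {K : Submodule 𝕜 E}
    [CompleteSpace K] (hT : ∀ x, T x ∈ K) {lam : 𝕜} (hlam : lam ≠ 0)
    (h : lam ∈ spectrum 𝕜 T) :
    lam ∈ spectrum 𝕜 (T.restrict (p := K) (q := K) fun x _ ↦ hT x) := by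
  set S := T.restrict (p := K) (q := K) fun x _ ↦ hT x
  contrapose! h
  rw [spectrum.notMem_iff, isUnit_iff_bijective] at h ⊢
  have hS (v : K) : ((algebraMap 𝕜 _ lam - S) v : E) = lam • (v : E) - T v := rfl
  refine ⟨(injective_iff_map_eq_zero _).mpr fun x hx ↦ ?_, fun y ↦ ?_⟩
  · rw [sub_apply, algebraMap_apply, sub_eq_zero] at hx
    have hxK : x ∈ K := inv_smul_smul₀ hlam x ▸ K.smul_mem lam⁻¹ (hx ▸ hT x)
    have hx0 : (algebraMap 𝕜 _ lam - S) ⟨x, hxK⟩ = 0 :=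
      Subtype.ext (by rw [hS, hx, sub_self]; rfl)
    simpa using congrArg Subtype.val ((injective_iff_map_eq_zero _).mp h.1 _ hx0)
  · obtain ⟨v, hv⟩ := h.2 ⟨lam⁻¹ • T y, K.smul_mem _ (hT y)⟩
    have hv' : lam • (v : E) - T v = lam⁻¹ • T y := by rw [← hS, hv]
    refine ⟨lam⁻¹ • y + v, ?_⟩
    rw [sub_apply, algebraMap_apply, map_add, map_smul, smul_add, smul_smul,
      mul_inv_cancel₀ hlam, one_smul]
    linear_combination (norm := module) hv'

end Banach

section Hilbert

variable {𝕜 E : Type*} [RCLike 𝕜] [NormedAddCommGroup E] [InnerProductSpace 𝕜 E]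

theorem ker_eq_orthogonal_range_of_range_eq_range_adjoint [CompleteSpace E] {T : E →L[𝕜] E}
    (h : T.range = (adjoint T).range) : T.ker = T.rangeᗮ := by
  rw [h, orthogonal_range, adjoint_adjoint]

theorem isUnit_restrict_range_of_ker_eq_orthogonal_range {T : E →L[𝕜] E}
    [CompleteSpace T.range] (h : T.ker = T.rangeᗮ) :
    IsUnit (T.restrict (p := T.range) (q := T.range) fun x _ ↦
      LinearMap.mem_range_self (T : E →ₗ[𝕜] E) x) := by
  rw [isUnit_iff_bijective]
  refine ⟨(injective_iff_map_eq_zero _).mpr fun v hv ↦ ?_, ?_⟩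
  · have hvker : (v : E) ∈ T.rangeᗮ := h ▸ congrArg Subtype.val hv
    exact Subtype.ext (Submodule.disjoint_def.mp T.range.orthogonal_disjoint _ v.2 hvker)
  · rintro ⟨_, x, rfl⟩
    obtain ⟨y, hy, z, hz, rfl⟩ := T.range.exists_add_mem_mem_orthogonal x
    have hTz : T z = 0 := (h ▸ hz : z ∈ T.ker)
    exact ⟨⟨y, hy⟩, Subtype.ext (by simp [hTz])⟩

end Hilbert

end ContinuousLinearMap

theorem spectrum.exists_pos_le_norm_of_isUnit (𝕜 : Type*) {A : Type*} [NormedField 𝕜]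
    [NormedRing A] [NormedAlgebra 𝕜 A] [CompleteSpace A] {a : A} (ha : IsUnit a) :
    ∃ ε > 0, ∀ lam ∈ spectrum 𝕜 a, ε ≤ ‖lam‖ := by
  obtain ⟨ε, hε, hball⟩ :=
    Metric.isOpen_iff.mp (spectrum.isClosed a).isOpen_compl 0 (spectrum.zero_notMem 𝕜 ha)
  exact ⟨ε, hε, fun lam hlam ↦ not_lt.mp fun hlt ↦ hball (mem_ball_zero_iff.mpr hlt) hlam⟩

variable {H : Type*} [NormedAddCommGroup H] [InnerProductSpace ℂ H] [CompleteSpace H]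

/-- Let `T` be a bounded EP operator on a complex Hilbert space `H` (closed range and
`R(T) = R(T*)`).  Then `0` is not a limit point of the spectrum of `T`: there is `ε > 0` such
that every nonzero `λ` in the spectrum of `T` satisfies `|λ| ≥ ε`. -/
theorem stmt6 (T : H →L[ℂ] H)
    (hrange : IsClosed ((LinearMap.range (T : H →ₗ[ℂ] H) : Submodule ℂ H) : Set H))
    (hEP : LinearMap.range (T : H →ₗ[ℂ] H) = LinearMap.range ((ContinuousLinearMap.adjoint T : H →L[ℂ] H) : H →ₗ[ℂ] H)) :
    ∃ ε : ℝ, 0 < ε ∧ ∀ lam ∈ spectrum ℂ T, lam ≠ 0 → ε ≤ ‖lam‖ := by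
  have : CompleteSpace T.range := hrange.completeSpace_coe
  have hunit := T.isUnit_restrict_range_of_ker_eq_orthogonal_range
    (T.ker_eq_orthogonal_range_of_range_eq_range_adjoint hEP)
  obtain ⟨ε, hε, hspec⟩ := spectrum.exists_pos_le_norm_of_isUnit ℂ
    (A := T.range →L[ℂ] T.range) hunit
  exact ⟨ε, hε, fun lam hlam hlam0 ↦
    hspec lam (T.mem_spectrum_restrict_of_mem_spectrum
      (LinearMap.mem_range_self (T : H →ₗ[ℂ] H)) hlam0 hlam)⟩
end

section
/- Let T be a densely defined closed operator on a complex Hilbert space H and let S be a bounded EP operator on H such that {S(Tx) : x ∈ D(T)} = R(T). Then the operator ST, defined on the domain D(T) by x ↦ S(Tx), is a closed operator. -/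
open LinearPMap

variable {H : Type*} [NormedAddCommGroup H] [InnerProductSpace ℂ H] [CompleteSpace H]

/-- The composition `S ∘ T` of a bounded operator `S` with a partial operator `T`,
defined on `D(T)` by `x ↦ S (T x)`. -/
noncomputable def pmCompL (S : H →L[ℂ] H) (T : H →ₗ.[ℂ] H) : H →ₗ.[ℂ] H where
  domain := T.domain
  toFun := (S : H →ₗ[ℂ] H) ∘ₗ T.toFun

/-! An EP operator `S` with closed range `K` has `ker S = (range S*)ᗮ = Kᗮ`, so `S` maps `K`
bijectively onto `K`, and the open mapping theorem gives a bounded `P` with `P (S y) = y` on `K`.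
As `R(ST) = R(T)` forces `R(T) ⊆ K`, the graph of `ST`, which is the image of the graph of `T`
under `id × S`, is cut out by the closed conditions `(x, P y) ∈ G(T)` and `S (P y) = y`. -/

theorem IsClosed.image_prodMap_of_leftInvOn {A B C : Type*} [TopologicalSpace A]
    [TopologicalSpace B] [TopologicalSpace C] [T2Space C] {s : Set (A × B)} (hs : IsClosed s)
    {f : B → C} {g : C → B} (hf : Continuous f) (hg : Continuous g)
    (hgf : ∀ p ∈ s, g (f p.2) = p.2) : IsClosed (Prod.map id f '' s) := by
  have : Prod.map id f '' s = {q | (q.1, g q.2) ∈ s} ∩ {q | f (g q.2) = q.2} := by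
    ext ⟨a, c⟩
    constructor
    · rintro ⟨⟨a, b⟩, hab, h⟩
      simp only [Prod.map, id, Prod.mk.injEq] at h
      obtain ⟨rfl, rfl⟩ := h
      have hb := hgf _ hab
      exact ⟨by simpa [hb] using hab, by simp [hb]⟩
    · rintro ⟨hs, hc⟩
      exact ⟨(a, g c), hs, Prod.ext rfl hc⟩
  rw [this]
  exact (hs.preimage (continuous_fst.prodMk (hg.comp continuous_snd))).inter
    (isClosed_eq (hf.comp (hg.comp continuous_snd)) continuous_snd)

theorem ContinuousLinearMap.exists_leftInverse_of_injective_of_isClosed_range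
    {𝕜 E F : Type*} [RCLike 𝕜] [NormedAddCommGroup E] [NormedSpace 𝕜 E] [CompleteSpace E]
    [NormedAddCommGroup F] [InnerProductSpace 𝕜 F] [CompleteSpace F] (f : E →L[𝕜] F)
    (hf : Function.Injective f) (hf' : IsClosed (Set.range f)) :
    ∃ g : F →L[𝕜] E, ∀ x, g (f x) = x := by
  have : CompleteSpace f.range := hf'.completeSpace_coe
  refine ⟨(f.equivRange hf hf').symm.toContinuousLinearMap ∘L f.range.orthogonalProjectionOnto,
    fun x => ?_⟩
  simp [Submodule.orthogonalProjectionOnto_mem_subspace_eq_self ⟨f x, f.mem_range_self x⟩]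

theorem ContinuousLinearMap.ker_eq_orthogonal_range_of_range_eq_range_adjoint_s7
    {𝕜 E : Type*} [RCLike 𝕜] [NormedAddCommGroup E] [InnerProductSpace 𝕜 E] [CompleteSpace E]
    (S : E →L[𝕜] E) (hS : S.range = (ContinuousLinearMap.adjoint S).range) : S.ker = S.rangeᗮ := by
  rw [hS, orthogonal_range, adjoint_adjoint]

theorem ContinuousLinearMap.exists_leftInvOn_range_of_range_eq_range_adjoint
    {𝕜 E : Type*} [RCLike 𝕜] [NormedAddCommGroup E] [InnerProductSpace 𝕜 E] [CompleteSpace E]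
    (S : E →L[𝕜] E) (hclosed : IsClosed (S.range : Set E))
    (hS : S.range = (ContinuousLinearMap.adjoint S).range) :
    ∃ P : E →L[𝕜] E, ∀ y ∈ S.range, P (S y) = y := by
  set K := S.range
  have : CompleteSpace K := hclosed.completeSpace_coe
  have hker := S.ker_eq_orthogonal_range_of_range_eq_range_adjoint_s7 hS
  set f := S ∘L K.subtypeL
  have hinj : Function.Injective f := by
    refine (injective_iff_map_eq_zero f).mpr fun k hk => ?_
    have hk' : (k : E) ∈ K ⊓ Kᗮ := ⟨k.2, hker ▸ hk⟩
    rw [K.inf_orthogonal_eq_bot] at hk'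
    exact Subtype.ext hk'
  have hrange : Set.range f = K := by
    ext y
    constructor
    · rintro ⟨k, rfl⟩
      exact ⟨k, rfl⟩
    · rintro ⟨x, rfl⟩
      refine ⟨K.orthogonalProjectionOnto x, ?_⟩
      have hx : x - K.starProjection x ∈ S.ker := hker ▸ K.sub_starProjection_mem_orthogonal x
      rw [LinearMap.mem_ker, _root_.map_sub, sub_eq_zero] at hx
      exact hx.symm
  obtain ⟨g, hg⟩ := f.exists_leftInverse_of_injective_of_isClosed_range hinj (hrange ▸ hclosed)
  exact ⟨K.subtypeL ∘L g, fun y hy => congrArg Subtype.val (hg ⟨y, hy⟩)⟩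

theorem pmCompL_graph {E : Type*} [NormedAddCommGroup E] [InnerProductSpace ℂ E]
    (S : E →L[ℂ] E) (T : E →ₗ.[ℂ] E) :
    ((pmCompL S T).graph : Set (E × E)) = Prod.map id S '' T.graph := by
  ext ⟨x, y⟩
  simp only [SetLike.mem_coe, mem_graph_iff, Set.mem_image, Prod.exists, Prod.map, id,
    Prod.mk.injEq]
  constructor
  · rintro ⟨u, rfl, rfl⟩
    exact ⟨u, T u, ⟨u, rfl, rfl⟩, rfl, rfl⟩
  · rintro ⟨_, _, ⟨u, rfl, rfl⟩, rfl, rfl⟩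
    exact ⟨u, rfl, rfl⟩

theorem stmt7_general (T : H →ₗ.[ℂ] H) (S : H →L[ℂ] H)
    (hclosed : IsClosed (T.graph : Set (H × H)))
    (hSrange : IsClosed ((LinearMap.range (S : H →ₗ[ℂ] H) : Submodule ℂ H) : Set H))
    (hSEP : LinearMap.range (S : H →ₗ[ℂ] H) = LinearMap.range (ContinuousLinearMap.adjoint S : H →ₗ[ℂ] H))
    (hST : LinearMap.range (pmCompL S T).toFun = LinearMap.range T.toFun) :
    IsClosed ((pmCompL S T).graph : Set (H × H)) := by
  obtain ⟨P, hP⟩ := S.exists_leftInvOn_range_of_range_eq_range_adjoint hSrange hSEP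
  have hT_range : ∀ u : T.domain, T u ∈ S.range := fun u => by
    obtain ⟨v, hv⟩ : T u ∈ LinearMap.range (pmCompL S T).toFun := hST ▸ ⟨u, rfl⟩
    exact ⟨T v, hv⟩
  rw [pmCompL_graph]
  refine hclosed.image_prodMap_of_leftInvOn S.continuous P.continuous ?_
  rintro _ hp
  obtain ⟨u, -, hu⟩ := T.mem_graph_iff.mp hp
  exact hu ▸ hP _ (hT_range u)

/-- Let `T` be a densely defined closed operator on a complex Hilbert space `H` and let `S`
be a bounded EP operator on `H` such that `R(ST) = R(T)`.  Then `ST` (defined on `D(T)`)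
is a closed operator. -/
theorem stmt7 (T : H →ₗ.[ℂ] H) (S : H →L[ℂ] H)
    (hdense : Dense (T.domain : Set H))
    (hclosed : IsClosed (T.graph : Set (H × H)))
    (hSrange : IsClosed ((LinearMap.range (S : H →ₗ[ℂ] H) : Submodule ℂ H) : Set H))
    (hSEP : LinearMap.range (S : H →ₗ[ℂ] H) = LinearMap.range (ContinuousLinearMap.adjoint S : H →ₗ[ℂ] H))
    (hST : LinearMap.range (pmCompL S T).toFun = LinearMap.range T.toFun) :
    IsClosed ((pmCompL S T).graph : Set (H × H)) :=
  stmt7_general T S hclosed hSrange hSEP hST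
end

section
/- Let T be a bounded EP operator on a complex Hilbert space H and let |T| be the positive square root of T*T. Then R(T) = R(|T|) = R(|T|^α) for every real α > 0, where |T|^α is defined by the continuous functional calculus. -/
/-!
Since `|T|² = T*T`, `ker T = ker |T|`. For closed `R(T)`, writing `y = T x + z` with
`z ∈ R(T)ᗮ = ker T*` gives `T* y = T*T x`, so `R(T) = R(T*) = R(T*T) ⊆ R(|T|)`; conversely
`R(|T|) ⊆ (ker |T|)ᗮ = (ker T)ᗮ = closure R(T*) = R(T)`.

As `R(|T|) = R(T)` is closed, the same decomposition shows `R(|T|) = R(|T|ⁿ)` for `n ≥ 1`,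
and `|T|ⁿ = |T|^α |T|^(n-α)` for `n ≥ α` gives `R(|T|) ⊆ R(|T|^α)`. For `mα ≥ 1`,
`(|T|^α)^m = |T|^(mα-1) |T|`, and a power of a self-adjoint operator has the same kernel, so
`ker |T| ⊆ ker |T|^α` and `R(|T|^α) ⊆ (ker |T|^α)ᗮ ⊆ (ker |T|)ᗮ = R(|T|)`.
-/

variable {H : Type*} [NormedAddCommGroup H] [InnerProductSpace ℂ H] [CompleteSpace H]

open ContinuousLinearMap
open scoped InnerProduct

namespace CFC

variable {A : Type*} [PartialOrder A] [Ring A] [StarRing A] [TopologicalSpace A]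
  [StarOrderedRing A] [Algebra ℝ A] [ContinuousFunctionalCalculus ℝ A IsSelfAdjoint]
  [NonnegSpectrumClass ℝ A]

lemma rpow_add_of_nonneg (a : A) {x y : ℝ} (hx : 0 ≤ x) (hy : 0 ≤ y) (hxy : x + y ≠ 0) :
    a ^ (x + y) = a ^ x * a ^ y := by
  simp only [rpow_def]
  rw [← cfc_mul _ _ a (NNReal.continuous_rpow_const hx).continuousOn
    (NNReal.continuous_rpow_const hy).continuousOn]
  exact cfc_congr fun z _ ↦ NNReal.rpow_add' hxy z

end CFC

section HilbertSpace

variable {𝕜 E F : Type*} [RCLike 𝕜] [NormedAddCommGroup E] [InnerProductSpace 𝕜 E]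
  [CompleteSpace E] [NormedAddCommGroup F] [InnerProductSpace 𝕜 F] [CompleteSpace F]

namespace ContinuousLinearMap

theorem range_adjoint_comp_self_of_isClosed_range (T : E →L[𝕜] F)
    (hT : IsClosed (T.range : Set F)) : (T† ∘L T).range = T†.range := by
  refine le_antisymm (LinearMap.range_comp_le_range _ _) ?_
  have : CompleteSpace T.range := hT.completeSpace_coe
  rintro _ ⟨y, rfl⟩
  obtain ⟨_, ⟨x, rfl⟩, z, hz, rfl⟩ := T.range.exists_add_mem_mem_orthogonal y
  rw [T.orthogonal_range] at hz
  exact ⟨x, by simp [show (T†) z = 0 from hz]⟩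

end ContinuousLinearMap

namespace IsSelfAdjoint

variable {A : E →L[𝕜] E}

theorem orthogonal_ker (hA : IsSelfAdjoint A) : A.kerᗮ = A.range.topologicalClosure := by
  rw [A.orthogonal_ker, hA.adjoint_eq]

theorem ker_pow (hA : IsSelfAdjoint A) {n : ℕ} (hn : n ≠ 0) : (A ^ n).ker = A.ker := by
  have hsq : A ^ 2 = A† ∘L A := by rw [pow_two, mul_def, hA.adjoint_eq]
  have hker : LinearMap.ker ((A : E →ₗ[𝕜] E) ^ 1) =
      LinearMap.ker ((A : E →ₗ[𝕜] E) ^ 2) := by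
    rw [pow_one, ← toLinearMap_pow, hsq]
    exact (ker_adjoint_comp_self A).symm
  obtain ⟨m, rfl⟩ := Nat.exists_eq_add_of_le' (Nat.one_le_iff_ne_zero.mpr hn)
  rw [toLinearMap_pow, add_comm, ← Module.End.ker_pow_constant hker m, pow_one]

theorem range_le_range_pow (hA : IsSelfAdjoint A) (hcl : IsClosed (A.range : Set E)) (n : ℕ) :
    A.range ≤ (A ^ (n + 1)).range := by
  induction n with
  | zero => rw [zero_add, pow_one]
  | succ n ih =>
    have hsq : (A ∘L A).range = A.range := by
      simpa only [hA.adjoint_eq] using A.range_adjoint_comp_self_of_isClosed_range hcl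
    calc A.range = (A ∘L A).range := hsq.symm
      _ = A.range.map A := by rw [toLinearMap_comp, LinearMap.range_comp]
      _ ≤ (A ^ (n + 1)).range.map A := Submodule.map_mono ih
      _ = (A ^ (n + 2)).range := by
        rw [pow_succ' A (n + 1), mul_def, toLinearMap_comp, LinearMap.range_comp]

end IsSelfAdjoint

theorem ContinuousLinearMap.range_eq_range_of_comp_self_eq_adjoint_comp_self {T R : E →L[𝕜] E}
    (hcl : IsClosed (T.range : Set E)) (hEP : T.range = T†.range) (hR : IsSelfAdjoint R)
    (hRT : R ∘L R = T† ∘L T) : T.range = R.range := by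
  have hker : T.ker = R.ker := by
    calc T.ker = (T† ∘L T).ker := (ker_adjoint_comp_self T).symm
      _ = (R† ∘L R).ker := by rw [hR.adjoint_eq, hRT]
      _ = R.ker := ker_adjoint_comp_self R
  refine le_antisymm ?_ ?_
  · calc T.range = (T† ∘L T).range := by
          rw [hEP, T.range_adjoint_comp_self_of_isClosed_range hcl]
      _ = (R ∘L R).range := by rw [hRT]
      _ ≤ R.range := LinearMap.range_comp_le_range _ _
  · calc R.range ≤ R.range.topologicalClosure := Submodule.le_topologicalClosure _
      _ = T.kerᗮ := by rw [hker, hR.orthogonal_ker]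
      _ = T.range := by rw [T.orthogonal_ker, ← hEP, hcl.submodule_topologicalClosure_eq]

end HilbertSpace

namespace ContinuousLinearMap

variable {R : H →L[ℂ] H} {α : ℝ}

theorem ker_le_ker_rpow (hR : 0 ≤ R) (hα : 0 < α) : R.ker ≤ (R ^ α).ker := by
  set m := ⌈α⁻¹⌉₊
  have hm : 1 ≤ α * m := (inv_le_iff_one_le_mul₀' hα).1 (Nat.le_ceil α⁻¹)
  have hpow : (R ^ α) ^ m = R ^ (α * m - 1) * R := by
    rw [← CFC.rpow_natCast (R ^ α) m,
      CFC.rpow_rpow_of_exponent_nonneg R α m hα.le m.cast_nonneg, ← sub_add_cancel (α * m) 1,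
      CFC.rpow_add_of_nonneg R (by linarith) zero_le_one (by linarith), add_sub_cancel_right,
      CFC.rpow_one R]
  have hS : IsSelfAdjoint (R ^ α) := .of_nonneg CFC.rpow_nonneg
  rw [← hS.ker_pow (Nat.ceil_pos.2 (inv_pos.2 hα)).ne', hpow, mul_def, toLinearMap_comp]
  exact LinearMap.ker_le_ker_comp _ _

theorem range_le_range_rpow (hR : 0 ≤ R) (hcl : IsClosed (R.range : Set H)) (hα : 0 < α) :
    R.range ≤ (R ^ α).range := by
  set k := ⌊α⌋₊
  have hpow : R ^ (k + 1) = R ^ α * R ^ ((k + 1 : ℝ) - α) := by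
    rw [← CFC.rpow_add_of_nonneg R hα.le (by linarith [Nat.lt_floor_add_one α]) (by linarith),
      add_sub_cancel, ← Nat.cast_succ, CFC.rpow_natCast R]
  calc R.range ≤ (R ^ (k + 1)).range := (IsSelfAdjoint.of_nonneg hR).range_le_range_pow hcl k
    _ ≤ (R ^ α).range := by
      rw [hpow, mul_def, toLinearMap_comp]
      exact LinearMap.range_comp_le_range _ _

theorem range_rpow_eq_range (hR : 0 ≤ R) (hcl : IsClosed (R.range : Set H)) (hα : 0 < α) :
    (R ^ α).range = R.range := by
  have hS : IsSelfAdjoint (R ^ α) := .of_nonneg CFC.rpow_nonneg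
  refine le_antisymm ?_ (range_le_range_rpow hR hcl hα)
  calc (R ^ α).range ≤ (R ^ α).range.topologicalClosure := Submodule.le_topologicalClosure _
    _ = (R ^ α).kerᗮ := hS.orthogonal_ker.symm
    _ ≤ R.kerᗮ := Submodule.orthogonal_le (ker_le_ker_rpow hR hα)
    _ = R.range := by
      rw [(IsSelfAdjoint.of_nonneg hR).orthogonal_ker, hcl.submodule_topologicalClosure_eq]

end ContinuousLinearMap

/-- Let `T` be a bounded EP operator on a complex Hilbert space `H` (closed range and
`R(T) = R(T*)`), and let `R = |T|` be the positive square root of `T*T`.  Then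
`R(T) = R(|T|) = R(|T|^α)` for every real `α > 0`, where `|T|^α = cfc (t ↦ t^α) |T|` is given
by the continuous functional calculus. -/
theorem stmt10 (T R : H →L[ℂ] H)
    (hrange : IsClosed ((LinearMap.range (T : H →ₗ[ℂ] H) : Submodule ℂ H) : Set H))
    (hEP : LinearMap.range (T : H →ₗ[ℂ] H) = LinearMap.range (ContinuousLinearMap.adjoint T : H →ₗ[ℂ] H))
    (hRpos : R.IsPositive)
    (hRsq : R ∘L R = ContinuousLinearMap.adjoint T ∘L T) :
    LinearMap.range (T : H →ₗ[ℂ] H) = LinearMap.range (R : H →ₗ[ℂ] H) ∧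
      ∀ α : ℝ, 0 < α →
        LinearMap.range (R : H →ₗ[ℂ] H) = LinearMap.range ((cfc (fun t : ℝ => t ^ α) R : H →L[ℂ] H) : H →ₗ[ℂ] H) := by
  have hR : 0 ≤ R := (nonneg_iff_isPositive R).2 hRpos
  have hTR := range_eq_range_of_comp_self_eq_adjoint_comp_self hrange hEP hRpos.isSelfAdjoint hRsq
  refine ⟨hTR, fun α hα ↦ ?_⟩
  rw [← CFC.rpow_eq_cfc_real hR, range_rpow_eq_range hR (hTR ▸ hrange) hα]
end

section
/- Let T be a bounded EP operator on a complex Hilbert space H. Then γ(T) ≤ r(T), where γ(T) = inf{ ‖Tx‖ : x ∈ (ker T)ᗮ, ‖x‖ = 1 } is the reduced minimum modulus of T and r(T) = sup{ |λ| : λ ∈ spectrum of T } is the spectral radius of T. -/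
/-!
For an EP operator, `(ker T)ᗮ = closure R(T*) = closure R(T)`, a subspace that `T` maps into
itself. On it `T` is bounded below by `γ(T)`, so iterating from a unit vector of `(ker T)ᗮ`
gives `γ(T) ^ n ≤ ‖T ^ n‖`, and Gelfand's formula turns this into `γ(T) ≤ r(T)`. When
`(ker T)ᗮ = 0` the infimum is over the empty set and `γ(T) = 0`.
-/

variable {H : Type*} [NormedAddCommGroup H] [InnerProductSpace ℂ H] [CompleteSpace H]

/-- The reduced minimum modulus of a bounded operator:
`γ(T) = inf { ‖Tx‖ : x ∈ (ker T)ᗮ, ‖x‖ = 1 }`. -/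
noncomputable def redMinModulus (T : H →L[ℂ] H) : ℝ :=
  sInf ((fun x => ‖T x‖) '' {x : H | x ∈ (LinearMap.ker (T : H →ₗ[ℂ] H) : Submodule ℂ H)ᗮ ∧ ‖x‖ = 1})

open Filter

theorem spectrum.ofReal_le_spectralRadius_of_pow_le_norm_pow {A : Type*} [NormedRing A]
    [NormedAlgebra ℂ A] [CompleteSpace A] {a : A} {c : ℝ} (hc : 0 ≤ c)
    (h : ∀ n : ℕ, c ^ n ≤ ‖a ^ n‖) : ENNReal.ofReal c ≤ spectralRadius ℂ a := by
  refine ge_of_tendsto (pow_norm_pow_one_div_tendsto_nhds_spectralRadius a) ?_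
  filter_upwards [eventually_ne_atTop 0] with n hn
  refine ENNReal.ofReal_le_ofReal ?_
  calc c = (c ^ n) ^ (1 / n : ℝ) := by rw [one_div, Real.pow_rpow_inv_natCast hc hn]
    _ ≤ ‖a ^ n‖ ^ (1 / n : ℝ) := by gcongr; exact h n

namespace ContinuousLinearMap

section

omit [CompleteSpace H]

theorem redMinModulus_nonneg (T : H →L[ℂ] H) : 0 ≤ redMinModulus T :=
  Real.sInf_nonneg fun _ ⟨_, _, hy⟩ => hy ▸ norm_nonneg _

theorem redMinModulus_mul_norm_le {T : H →L[ℂ] H} {x : H} (hx : x ∈ T.kerᗮ) :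
    redMinModulus T * ‖x‖ ≤ ‖T x‖ := by
  rcases eq_or_ne x 0 with rfl | hx₀
  · simp
  have hpos : 0 < ‖x‖ := norm_pos_iff.mpr hx₀
  have hunit : ‖(‖x‖ : ℂ)⁻¹ • x‖ = 1 := by
    rw [norm_smul, norm_inv, Complex.norm_real, norm_norm, inv_mul_cancel₀ hpos.ne']
  have hbdd : BddBelow ((fun x => ‖T x‖) '' {x : H | x ∈ T.kerᗮ ∧ ‖x‖ = 1}) :=
    ⟨0, fun _ ⟨_, _, hy⟩ => hy ▸ norm_nonneg _⟩
  have hle : redMinModulus T ≤ ‖T ((‖x‖ : ℂ)⁻¹ • x)‖ :=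
    csInf_le hbdd ⟨_, ⟨Submodule.smul_mem _ _ hx, hunit⟩, rfl⟩
  rw [map_smul, norm_smul, norm_inv, Complex.norm_real, norm_norm] at hle
  rw [mul_comm]
  exact (le_inv_mul_iff₀ hpos).mp hle

theorem redMinModulus_pow_mul_norm_le_norm_pow_apply {T : H →L[ℂ] H}
    (hT : Set.MapsTo T T.kerᗮ T.kerᗮ) (n : ℕ) {x : H} (hx : x ∈ T.kerᗮ) :
    redMinModulus T ^ n * ‖x‖ ≤ ‖(T ^ n) x‖ := by
  induction n generalizing x with
  | zero => simp
  | succ n ih =>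
    calc redMinModulus T ^ (n + 1) * ‖x‖ = redMinModulus T ^ n * (redMinModulus T * ‖x‖) := by
          ring
      _ ≤ redMinModulus T ^ n * ‖T x‖ := by
          gcongr
          · exact pow_nonneg (redMinModulus_nonneg T) n
          · exact redMinModulus_mul_norm_le hx
      _ ≤ ‖(T ^ (n + 1)) x‖ := by rw [pow_succ]; exact ih (hT hx)

end

theorem ofReal_redMinModulus_le_spectralRadius {T : H →L[ℂ] H}
    (hT : Set.MapsTo T T.kerᗮ T.kerᗮ) :
    ENNReal.ofReal (redMinModulus T) ≤ spectralRadius ℂ T := by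
  by_cases hunit : ∃ x ∈ T.kerᗮ, ‖x‖ = 1
  · obtain ⟨x, hx, hx₁⟩ := hunit
    refine spectrum.ofReal_le_spectralRadius_of_pow_le_norm_pow (redMinModulus_nonneg T)
      fun n => ?_
    calc redMinModulus T ^ n = redMinModulus T ^ n * ‖x‖ := by rw [hx₁, mul_one]
      _ ≤ ‖(T ^ n) x‖ := redMinModulus_pow_mul_norm_le_norm_pow_apply hT n hx
      _ ≤ ‖T ^ n‖ := by simpa [hx₁] using (T ^ n).le_opNorm x
  · have hempty : {x : H | x ∈ T.kerᗮ ∧ ‖x‖ = 1} = ∅ :=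
      Set.eq_empty_iff_forall_notMem.mpr fun x hx => hunit ⟨x, hx⟩
    simp [redMinModulus, hempty]

theorem apply_mem_orthogonal_ker_of_range_eq_range_adjoint {T : H →L[ℂ] H}
    (hEP : T.range = (adjoint T).range) (x : H) : T x ∈ T.kerᗮ := by
  rw [orthogonal_ker, ← hEP]
  exact Submodule.le_topologicalClosure _ ⟨x, rfl⟩

end ContinuousLinearMap

theorem stmt17_general (T : H →L[ℂ] H)
    (hEP : LinearMap.range (T : H →ₗ[ℂ] H) = LinearMap.range ((ContinuousLinearMap.adjoint T : H →L[ℂ] H) : H →ₗ[ℂ] H)) :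
    ENNReal.ofReal (redMinModulus T) ≤ spectralRadius ℂ T :=
  ContinuousLinearMap.ofReal_redMinModulus_le_spectralRadius fun x _ =>
    ContinuousLinearMap.apply_mem_orthogonal_ker_of_range_eq_range_adjoint hEP x

/-- Let `T` be a bounded EP operator on a complex Hilbert space `H` (closed range and
`R(T) = R(T*)`).  Then `γ(T) ≤ r(T)`, where `γ(T)` is the reduced minimum modulus and
`r(T)` is the spectral radius of `T`. -/
theorem stmt17 (T : H →L[ℂ] H)
    (hrange : IsClosed ((LinearMap.range (T : H →ₗ[ℂ] H) : Submodule ℂ H) : Set H))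
    (hEP : LinearMap.range (T : H →ₗ[ℂ] H) = LinearMap.range ((ContinuousLinearMap.adjoint T : H →L[ℂ] H) : H →ₗ[ℂ] H)) :
    ENNReal.ofReal (redMinModulus T) ≤ spectralRadius ℂ T :=
  stmt17_general T hEP
end
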